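/- Let H be a finite hypergroup and Z_∞(H) its hypercenter (the terminal term of the upper central series). Then H//Z_∞(H) is weakly nilpotent if and only if H is weakly nilpotent; in fact if H#Z_∞(H) is weakly nilpotent then H = Z_∞(H). Equivalently, Z(H//Z_∞(H)) is trivial whenever Z_∞(H) ≠ H. -/

import Mathlib

/-- A hypergroup: a set with a hypermultiplication, identity and involution
satisfying (H1), (H2), (H3). -/
structure Hypergroup (H : Type*) where
  hmul : H → H → Set H
  one : H
  star : H → H
  assoc : ∀ p q r : H, (⋃ x ∈ hmul q r, hmul p x) = ⋃ x ∈ hmul p q, hmul x r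
  hmul_one : ∀ s : H, hmul s one = {s}
  inv_left : ∀ p q r : H, r ∈ hmul p q → q ∈ hmul (star p) r
  inv_right : ∀ p q r : H, r ∈ hmul p q → p ∈ hmul r (star q)

namespace Hypergroup

variable {H : Type*} (G : Hypergroup H)

/-- Complex (set) product: `AB = ⋃_{a ∈ A, b ∈ B} ab`. -/
def smul (A B : Set H) : Set H := ⋃ a ∈ A, ⋃ b ∈ B, G.hmul a b

/-- `A* = { a* | a ∈ A }`. -/
def sstar (A : Set H) : Set H := G.star '' A

/-- A nonempty subset `F` is closed if `F*F ⊆ F`. -/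
def IsClosed (F : Set H) : Prop := F.Nonempty ∧ G.smul (G.sstar F) F ⊆ F

/-- `F` is normal in `K`: `Fk ⊆ kF` for all `k ∈ K`. -/
def IsNormalIn (F K : Set H) : Prop := ∀ k ∈ K, G.smul F {k} ⊆ G.smul {k} F

/-- `F` is strongly normal in `K`: `k*Fk ⊆ F` for all `k ∈ K`. -/
def IsStronglyNormalIn (F K : Set H) : Prop :=
  ∀ k ∈ K, G.smul (G.smul {G.star k} F) {k} ⊆ F

/-- An element `s` is thin if `s*s = {1}`. -/
def IsThinElem (s : H) : Prop := G.hmul (G.star s) s = {G.one}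

/-- A hypergroup is thin if all elements are thin. -/
def IsThin : Prop := ∀ s : H, G.IsThinElem s

/-- The center `Z(H) = {h | hx = xh for all x, h*h = {1}}`. -/
def center : Set H :=
  {h | (∀ x : H, G.hmul h x = G.hmul x h) ∧ G.hmul (G.star h) h = {G.one}}

/-- The class `h^F := FhF`. -/
def cls (F : Set H) (h : H) : Set H := G.smul (G.smul F {h}) F

/-- The quotient set `H//F := { h^F | h ∈ H }`. -/
def quotSet (F : Set H) : Set (Set H) := Set.range (G.cls F)

/-- The class `h^F` as an element of `H//F`. -/
def qcls (F : Set H) (h : H) : G.quotSet F := ⟨G.cls F h, h, rfl⟩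

/-- The full preimage in `H` of the center of the quotient `H//T`:
`{h | h^T ∈ Z(H//T)}`, i.e. `h^T` commutes with all classes `y^T` and
`(h^T)*(h^T) = {1^T} = {T}`. -/
def qCenterPre (T : Set H) : Set H :=
  {h | (∀ y : H, G.cls T '' (G.smul (G.smul {h} T) {y}) =
          G.cls T '' (G.smul (G.smul {y} T) {h})) ∧
       G.cls T '' (G.smul (G.smul {G.star h} T) {h}) = {T}}

/-- The upper central series: `Z₀(H) = {1}`, and `Zᵢ₊₁(H)` is the full preimage
of `Z(H//Zᵢ(H))`, i.e. `Zᵢ₊₁(H)//Zᵢ(H) = Z(H//Zᵢ(H))`. -/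
def upperCentral : ℕ → Set H
  | 0 => {G.one}
  | n + 1 => G.qCenterPre (upperCentral n)

/-- A hypergroup is weakly nilpotent if `Zₙ(H) = H` for some `n`. -/
def WeaklyNilpotent : Prop := ∃ n : ℕ, G.upperCentral n = Set.univ

/-- `F` is subnormal in `K` via a chain of successively normal closed subsets. -/
def IsSubnormalIn (F K : Set H) : Prop :=
  ∃ n : ℕ, ∃ C : ℕ → Set H, C 0 = F ∧ C n = K ∧
    ∀ i < n, C i ⊆ C (i + 1) ∧ G.IsClosed (C (i + 1)) ∧ G.IsNormalIn (C i) (C (i + 1))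

/-- The quotient `K//N` is thin: `(k^N)*(k^N) = {1^N}` for all `k ∈ K`. -/
def QuotThin (N K : Set H) : Prop :=
  ∀ k ∈ K, G.cls N '' (G.smul (G.smul {G.star k} N) {k}) = {N}

/-- A residually-thin chain from `{1}` to `K`. -/
def RTChainOn (K : Set H) (n : ℕ) (C : ℕ → Set H) : Prop :=
  C 0 = {G.one} ∧ C n = K ∧
    ∀ i < n, C i ⊆ C (i + 1) ∧ G.IsClosed (C (i + 1)) ∧ G.QuotThin (C i) (C (i + 1))

/-- The valency `n_K = ∏ |Cᵢ₊₁//Cᵢ|` computed along some RT chain for `K`. -/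
def HasValencyOn (K : Set H) (m : ℕ) : Prop :=
  ∃ n C, G.RTChainOn K n C ∧
    m = ∏ i ∈ Finset.range n, Nat.card (G.cls (C i) '' C (i + 1))

/-- A closed `p`-subset: a closed subset whose valency is a power of `p`. -/
def PSubsetOn (p : ℕ) (K : Set H) : Prop :=
  G.IsClosed K ∧ ∃ m k : ℕ, G.HasValencyOn K m ∧ m = p ^ k

/-- `h` is `p`-valenced in `K`: for every subnormal closed `p`-subset `U` of `K`
such that `(h*)^U h^U` consists of thin elements of the quotient,
`n_{(h*)^U h^U} = |(h*)^U h^U|` is a power of `p`. -/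
def PValencedElemOn (p : ℕ) (K : Set H) (h : H) : Prop :=
  ∀ U : Set H, G.IsClosed U → U ⊆ K → G.IsSubnormalIn U K → G.PSubsetOn p U →
    (∀ x ∈ G.smul (G.smul {G.star h} U) {h},
      G.cls U '' (G.smul (G.smul {G.star x} U) {x}) = {U}) →
    ∃ k : ℕ, Nat.card (G.cls U '' (G.smul (G.smul {G.star h} U) {h})) = p ^ k

/-- `K` is `p`-valenced if all its elements are. -/
def PValencedOn (p : ℕ) (K : Set H) : Prop := ∀ h ∈ K, G.PValencedElemOn p K h

end Hypergroup

/-!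
The terms of the upper central series are closed: if `T` is closed, every `h` whose class is
central in `H//T` normalises `T` (`Th = hT`, from `h*Th ⊆ T` and its mirror image `hTh* ⊆ T`),
hence `(gh)^T = g^T h^T`, and centrality of classes passes to products and to `*`.
For the hypercentre `Z`, a class `h^Z` central in `H//Z` forces `h ∈ qCenterPre Z = Z`, i.e.
`h^Z = 1`. So `H//Z` has trivial centre, its upper central series is constantly `{1}`, and it is
weakly nilpotent exactly when it is trivial, that is, when `Z = H`.
-/

namespace Hypergroup

variable {H : Type*} (G : Hypergroup H)

lemma mem_smul {A B : Set H} {x : H} :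
    x ∈ G.smul A B ↔ ∃ a ∈ A, ∃ b ∈ B, x ∈ G.hmul a b := by
  simp [smul]

lemma smul_mono {A A' B B' : Set H} (hA : A ⊆ A') (hB : B ⊆ B') :
    G.smul A B ⊆ G.smul A' B' :=
  Set.biUnion_mono hA fun _ _ => Set.biUnion_subset_biUnion_left hB

lemma smul_singleton (a b : H) : G.smul {a} {b} = G.hmul a b := by
  simp [smul]

lemma smul_assoc (A B C : Set H) :
    G.smul (G.smul A B) C = G.smul A (G.smul B C) := by
  ext x
  simp only [mem_smul]
  constructor
  · rintro ⟨z, ⟨a, ha, b, hb, hz⟩, c, hc, hx⟩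
    have : x ∈ ⋃ y ∈ G.hmul b c, G.hmul a y := by
      rw [G.assoc]; exact Set.mem_biUnion hz hx
    obtain ⟨y, hy, hxy⟩ := Set.mem_iUnion₂.1 this
    exact ⟨a, ha, y, ⟨b, hb, c, hc, hy⟩, hxy⟩
  · rintro ⟨a, ha, z, ⟨b, hb, c, hc, hz⟩, hx⟩
    have : x ∈ ⋃ y ∈ G.hmul a b, G.hmul y c := by
      rw [← G.assoc]; exact Set.mem_biUnion hz hx
    obtain ⟨y, hy, hxy⟩ := Set.mem_iUnion₂.1 this
    exact ⟨y, ⟨a, ha, b, hb, hy⟩, c, hc, hxy⟩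

lemma one_mem_star_hmul (s : H) : G.one ∈ G.hmul (G.star s) s :=
  G.inv_left s G.one s (by rw [G.hmul_one]; rfl)

lemma star_star (s : H) : G.star (G.star s) = s := by
  have h := G.inv_left _ _ _ (G.one_mem_star_hmul s)
  rw [G.hmul_one] at h
  exact h.symm

lemma one_hmul (s : H) : G.hmul G.one s = {s} := by
  refine Set.Subset.antisymm (fun c hc => ?_) (Set.singleton_subset_iff.2 ?_)
  · have h := G.inv_left _ _ _ (G.inv_right _ _ _ hc)
    rw [G.hmul_one, Set.mem_singleton_iff] at h
    rw [Set.mem_singleton_iff, ← G.star_star c, ← h, G.star_star]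
  · simpa only [G.star_star] using G.inv_right _ _ _ (G.one_mem_star_hmul (G.star s))

lemma star_one : G.star G.one = G.one := by
  have h := G.inv_right G.one G.one G.one (by rw [G.one_hmul]; rfl)
  rw [G.one_hmul, Set.mem_singleton_iff] at h
  exact h.symm

lemma hmul_nonempty (p q : H) : (G.hmul p q).Nonempty := by
  have hp : p ∈ ⋃ x ∈ G.hmul q (G.star q), G.hmul p x := by
    refine Set.mem_biUnion ?_ (by rw [G.hmul_one]; rfl)
    simpa only [G.star_star] using G.one_mem_star_hmul (G.star q)
  rw [G.assoc] at hp
  obtain ⟨x, hx, _⟩ := Set.mem_iUnion₂.1 hp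
  exact ⟨x, hx⟩

lemma smul_nonempty {A B : Set H} (hA : A.Nonempty) (hB : B.Nonempty) :
    (G.smul A B).Nonempty := by
  obtain ⟨a, ha⟩ := hA
  obtain ⟨b, hb⟩ := hB
  obtain ⟨x, hx⟩ := G.hmul_nonempty a b
  exact ⟨x, G.mem_smul.2 ⟨a, ha, b, hb, hx⟩⟩

lemma star_mem_hmul {p q r : H} (h : r ∈ G.hmul p q) :
    G.star r ∈ G.hmul (G.star q) (G.star p) :=
  G.inv_left _ _ _ (G.inv_right _ _ _ (G.inv_left _ _ _ h))

lemma mem_sstar {A : Set H} {x : H} : x ∈ G.sstar A ↔ G.star x ∈ A :=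
  ⟨by rintro ⟨a, ha, rfl⟩; rwa [G.star_star], fun h => ⟨G.star x, h, G.star_star x⟩⟩

lemma sstar_singleton (a : H) : G.sstar {a} = {G.star a} := Set.image_singleton

lemma sstar_smul (A B : Set H) :
    G.sstar (G.smul A B) = G.smul (G.sstar B) (G.sstar A) := by
  ext x
  simp only [mem_sstar, mem_smul]
  constructor
  · rintro ⟨a, ha, b, hb, hx⟩
    refine ⟨G.star b, by rwa [G.star_star], G.star a, by rwa [G.star_star], ?_⟩
    simpa only [G.star_star] using G.star_mem_hmul hx
  · rintro ⟨b, hb, a, ha, hx⟩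
    exact ⟨G.star a, ha, G.star b, hb, G.star_mem_hmul hx⟩

lemma singleton_one_smul (A : Set H) : G.smul {G.one} A = A := by
  ext x
  simp [mem_smul, one_hmul]

lemma smul_singleton_one (A : Set H) : G.smul A {G.one} = A := by
  ext x
  simp [mem_smul, hmul_one]

lemma subset_smul_left {T : Set H} (h1 : G.one ∈ T) (A : Set H) : A ⊆ G.smul T A :=
  fun a ha => G.mem_smul.2 ⟨G.one, h1, a, ha, by rw [G.one_hmul]; rfl⟩

lemma subset_smul_right {T : Set H} (h1 : G.one ∈ T) (A : Set H) : A ⊆ G.smul A T :=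
  fun a ha => G.mem_smul.2 ⟨a, ha, G.one, h1, by rw [G.hmul_one]; rfl⟩

lemma subset_smul_smul {T : Set H} (h1 : G.one ∈ T) (A : Set H) :
    A ⊆ G.smul (G.smul T A) T :=
  (G.subset_smul_left h1 A).trans (G.subset_smul_right h1 _)

lemma mem_cls_self {T : Set H} (h1 : G.one ∈ T) (w : H) : w ∈ G.cls T w :=
  G.subset_smul_smul h1 {w} rfl

lemma isClosed_of_forall {F : Set H} (h1 : G.one ∈ F) (hstar : ∀ x ∈ F, G.star x ∈ F)
    (hmul : G.smul F F ⊆ F) : G.IsClosed F :=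
  ⟨⟨_, h1⟩, (G.smul_mono (fun x hx => G.star_star x ▸ hstar _ (G.mem_sstar.1 hx))
    subset_rfl).trans hmul⟩

lemma isClosed_singleton_one : G.IsClosed {G.one} :=
  G.isClosed_of_forall rfl (fun x hx => by rw [hx, G.star_one]; rfl)
    (by rw [G.singleton_one_smul])

lemma smul_smul_eq_biUnion_cls (T S : Set H) :
    G.smul (G.smul T S) T = ⋃ w ∈ S, G.cls T w := by
  ext x
  simp only [cls, mem_smul, Set.mem_iUnion, Set.mem_singleton_iff, exists_prop]
  grind

lemma singleton_smul_subset_smul_singleton {T : Set H} {a : H}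
    (h : G.smul (G.smul {a} T) {G.star a} ⊆ T) : G.smul {a} T ⊆ G.smul T {a} := by
  intro u hu
  obtain ⟨x, hx⟩ := G.hmul_nonempty u (G.star a)
  have hux : u ∈ G.hmul x a := by simpa only [G.star_star] using G.inv_right _ _ _ hx
  exact G.mem_smul.2 ⟨x, h (G.mem_smul.2 ⟨u, hu, _, rfl, hx⟩), a, rfl, hux⟩

lemma smul_singleton_subset_singleton_smul {T : Set H} {a : H}
    (h : G.smul (G.smul {G.star a} T) {a} ⊆ T) : G.smul T {a} ⊆ G.smul {a} T := by
  intro u hu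
  obtain ⟨x, hx⟩ := G.hmul_nonempty (G.star a) u
  have hxT : x ∈ T := h (by rw [smul_assoc]; exact G.mem_smul.2 ⟨_, rfl, u, hu, hx⟩)
  have hux : u ∈ G.hmul a x := by simpa only [G.star_star] using G.inv_left _ _ _ hx
  exact G.mem_smul.2 ⟨a, rfl, x, hxT, hux⟩

lemma star_conj_subset_of_mem_hmul {T : Set H} {g h w : H}
    (hg : G.smul (G.smul {G.star g} T) {g} ⊆ T) (hh : G.smul (G.smul {G.star h} T) {h} ⊆ T)
    (hw : w ∈ G.hmul g h) : G.smul (G.smul {G.star w} T) {w} ⊆ T :=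
  calc G.smul (G.smul {G.star w} T) {w}
      ⊆ G.smul (G.smul (G.smul {G.star h} {G.star g}) T) (G.smul {g} {h}) := by
        rw [smul_singleton, smul_singleton]
        exact G.smul_mono (G.smul_mono (Set.singleton_subset_iff.2 (G.star_mem_hmul hw))
          subset_rfl) (Set.singleton_subset_iff.2 hw)
    _ = G.smul (G.smul {G.star h} (G.smul (G.smul {G.star g} T) {g})) {h} := by
        simp only [smul_assoc]
    _ ⊆ G.smul (G.smul {G.star h} T) {h} := G.smul_mono (G.smul_mono subset_rfl hg) subset_rfl
    _ ⊆ T := hh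

namespace IsClosed

variable {G} {T : Set H}

lemma one_mem (hT : G.IsClosed T) : G.one ∈ T := by
  obtain ⟨t, ht⟩ := hT.1
  exact hT.2 (G.mem_smul.2 ⟨G.star t, ⟨t, ht, rfl⟩, t, ht, G.one_mem_star_hmul t⟩)

lemma star_mem (hT : G.IsClosed T) {t : H} (ht : t ∈ T) : G.star t ∈ T :=
  hT.2 (G.mem_smul.2 ⟨G.star t, ⟨t, ht, rfl⟩, G.one, hT.one_mem, by rw [G.hmul_one]; rfl⟩)

lemma smul_self (hT : G.IsClosed T) : G.smul T T = T := by
  refine Set.Subset.antisymm ?_ (G.subset_smul_right hT.one_mem T)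
  refine (G.smul_mono (fun a ha => ?_) subset_rfl).trans hT.2
  exact G.mem_sstar.2 (hT.star_mem ha)

lemma smul_smul_self (hT : G.IsClosed T) (A : Set H) : G.smul T (G.smul T A) = G.smul T A := by
  rw [← smul_assoc, hT.smul_self]

lemma sstar_eq (hT : G.IsClosed T) : G.sstar T = T := by
  ext x
  rw [G.mem_sstar]
  exact ⟨fun hx => G.star_star x ▸ hT.star_mem hx, hT.star_mem⟩

lemma cls_one (hT : G.IsClosed T) : G.cls T G.one = T := by
  rw [cls, smul_singleton_one, hT.smul_self]

lemma smul_cls (hT : G.IsClosed T) (a : H) : G.smul T (G.cls T a) = G.cls T a := by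
  simp only [cls, smul_assoc, hT.smul_smul_self]

lemma cls_smul (hT : G.IsClosed T) (a : H) : G.smul (G.cls T a) T = G.cls T a := by
  simp only [cls, smul_assoc, hT.smul_self]

lemma cls_smul_cls (hT : G.IsClosed T) (a b : H) :
    G.smul (G.cls T a) (G.cls T b) = G.smul (G.smul T (G.smul (G.smul {a} T) {b})) T := by
  simp only [cls, smul_assoc, hT.smul_smul_self]

lemma sstar_cls_smul_cls (hT : G.IsClosed T) (a b : H) :
    G.sstar (G.smul (G.cls T a) (G.cls T b)) =
      G.smul (G.cls T (G.star b)) (G.cls T (G.star a)) := by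
  simp only [cls, sstar_smul, sstar_singleton, hT.sstar_eq, smul_assoc]

lemma cls_subset_of_mem (hT : G.IsClosed T) {u w : H} (hu : u ∈ G.cls T w) :
    G.cls T u ⊆ G.cls T w :=
  calc G.cls T u ⊆ G.smul (G.smul T (G.cls T w)) T :=
        G.smul_mono (G.smul_mono subset_rfl (Set.singleton_subset_iff.2 hu)) subset_rfl
    _ = G.cls T w := by rw [hT.smul_cls, hT.cls_smul]

lemma mem_cls_comm (hT : G.IsClosed T) {u w : H} (hu : u ∈ G.cls T w) : w ∈ G.cls T u := by
  obtain ⟨z, hz, c, hc, huz⟩ := G.mem_smul.1 hu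
  obtain ⟨t, ht, b, hb, hzt⟩ := G.mem_smul.1 hz
  rw [Set.mem_singleton_iff.1 hb] at hzt
  have hw : w ∈ G.smul (G.smul {G.star t} {u}) {G.star c} := by
    rw [smul_assoc, smul_singleton]
    exact G.mem_smul.2 ⟨_, rfl, z, G.inv_right _ _ _ huz, G.inv_left _ _ _ hzt⟩
  exact G.smul_mono (G.smul_mono (Set.singleton_subset_iff.2 (hT.star_mem ht)) subset_rfl)
    (Set.singleton_subset_iff.2 (hT.star_mem hc)) hw

lemma cls_eq_of_mem (hT : G.IsClosed T) {u w : H} (hu : u ∈ G.cls T w) :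
    G.cls T u = G.cls T w :=
  (hT.cls_subset_of_mem hu).antisymm (hT.cls_subset_of_mem (hT.mem_cls_comm hu))

lemma cls_eq_self_iff (hT : G.IsClosed T) {h : H} : G.cls T h = T ↔ h ∈ T := by
  refine ⟨fun hh => hh ▸ G.mem_cls_self hT.one_mem h, fun hh => ?_⟩
  have := hT.cls_eq_of_mem (u := h) (w := G.one) (by rwa [hT.cls_one])
  rwa [hT.cls_one] at this

lemma image_cls_subset (hT : G.IsClosed T) {S₁ S₂ : Set H}
    (h : G.smul (G.smul T S₁) T ⊆ G.smul (G.smul T S₂) T) :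
    G.cls T '' S₁ ⊆ G.cls T '' S₂ := by
  rintro _ ⟨s, hs, rfl⟩
  have : s ∈ ⋃ w ∈ S₂, G.cls T w := by
    rw [← smul_smul_eq_biUnion_cls]
    exact h (G.subset_smul_smul hT.one_mem S₁ hs)
  obtain ⟨w, hw, hsw⟩ := Set.mem_iUnion₂.1 this
  exact ⟨w, hw, (hT.cls_eq_of_mem hsw).symm⟩

lemma image_cls_eq_iff (hT : G.IsClosed T) {S₁ S₂ : Set H} :
    G.cls T '' S₁ = G.cls T '' S₂ ↔ G.smul (G.smul T S₁) T = G.smul (G.smul T S₂) T := by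
  refine ⟨fun h => ?_, fun h => (hT.image_cls_subset h.le).antisymm (hT.image_cls_subset h.ge)⟩
  rw [smul_smul_eq_biUnion_cls, smul_smul_eq_biUnion_cls, ← Set.sUnion_image,
    ← Set.sUnion_image, h]

lemma image_cls_eq_singleton_iff (hT : G.IsClosed T) {S : Set H} (hS : S.Nonempty) :
    G.cls T '' S = {T} ↔ S ⊆ T := by
  simp only [Set.eq_singleton_iff_nonempty_unique_mem, hS.image, true_and,
    Set.forall_mem_image, hT.cls_eq_self_iff, Set.subset_def]

lemma mem_qCenterPre_iff (hT : G.IsClosed T) {h : H} :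
    h ∈ G.qCenterPre T ↔
      (∀ y, G.smul (G.cls T h) (G.cls T y) = G.smul (G.cls T y) (G.cls T h)) ∧
        G.smul (G.smul {G.star h} T) {h} ⊆ T := by
  refine and_congr (forall_congr' fun y => ?_) (hT.image_cls_eq_singleton_iff ?_)
  · rw [hT.image_cls_eq_iff, hT.cls_smul_cls, hT.cls_smul_cls]
  · exact G.smul_nonempty (G.smul_nonempty (Set.singleton_nonempty _) ⟨_, hT.one_mem⟩)
      (Set.singleton_nonempty _)

lemma conj_subset_of_mem_qCenterPre (hT : G.IsClosed T) {h : H} (hh : h ∈ G.qCenterPre T) :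
    G.smul (G.smul {h} T) {G.star h} ⊆ T := by
  obtain ⟨hcomm, hconj⟩ := hT.mem_qCenterPre_iff.1 hh
  calc G.smul (G.smul {h} T) {G.star h}
      ⊆ G.smul (G.smul T (G.smul (G.smul {h} T) {G.star h})) T :=
        G.subset_smul_smul hT.one_mem _
    _ = G.smul (G.smul T (G.smul (G.smul {G.star h} T) {h})) T := by
        rw [← hT.cls_smul_cls, hcomm, hT.cls_smul_cls]
    _ ⊆ G.smul (G.smul T T) T := G.smul_mono (G.smul_mono subset_rfl hconj) subset_rfl
    _ = T := by rw [hT.smul_self, hT.smul_self]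

lemma smul_singleton_comm_of_mem_qCenterPre (hT : G.IsClosed T) {h : H}
    (hh : h ∈ G.qCenterPre T) : G.smul T {h} = G.smul {h} T :=
  (G.smul_singleton_subset_singleton_smul (hT.mem_qCenterPre_iff.1 hh).2).antisymm
    (G.singleton_smul_subset_smul_singleton (hT.conj_subset_of_mem_qCenterPre hh))

lemma cls_eq_cls_smul_cls_of_mem_hmul (hT : G.IsClosed T) {g h w : H}
    (hcomm : G.smul T {h} = G.smul {h} T) (hconj : G.smul (G.smul {G.star h} T) {h} ⊆ T)
    (hw : w ∈ G.hmul g h) : G.cls T w = G.smul (G.cls T g) (G.cls T h) := by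
  have hw' : {w} ⊆ G.smul {g} {h} := by
    rw [smul_singleton]; exact Set.singleton_subset_iff.2 hw
  have hg : {g} ⊆ G.smul {w} {G.star h} := by
    rw [smul_singleton]; exact Set.singleton_subset_iff.2 (G.inv_right _ _ _ hw)
  have hstar : G.smul {G.star h} {h} ⊆ T :=
    (G.smul_mono (G.subset_smul_right hT.one_mem _) subset_rfl).trans hconj
  rw [hT.cls_smul_cls]
  refine Set.Subset.antisymm (G.smul_mono (G.smul_mono subset_rfl ?_) subset_rfl) ?_
  · exact hw'.trans (G.smul_mono (G.subset_smul_right hT.one_mem _) subset_rfl)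
  calc G.smul (G.smul T (G.smul (G.smul {g} T) {h})) T
      = G.smul (G.smul T (G.smul (G.smul {g} {h}) T)) T := by
        rw [G.smul_assoc {g}, hcomm, ← G.smul_assoc {g}]
    _ ⊆ G.smul (G.smul T (G.smul (G.smul (G.smul {w} {G.star h}) {h}) T)) T :=
        G.smul_mono (G.smul_mono subset_rfl (G.smul_mono (G.smul_mono hg subset_rfl)
          subset_rfl)) subset_rfl
    _ = G.smul (G.smul T (G.smul (G.smul {w} (G.smul {G.star h} {h})) T)) T := by
        rw [G.smul_assoc {w}]
    _ ⊆ G.smul (G.smul T (G.smul (G.smul {w} T) T)) T :=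
        G.smul_mono (G.smul_mono subset_rfl (G.smul_mono (G.smul_mono subset_rfl hstar)
          subset_rfl)) subset_rfl
    _ = G.cls T w := by simp only [cls, smul_assoc, hT.smul_self]

lemma star_mem_qCenterPre (hT : G.IsClosed T) {h : H} (hh : h ∈ G.qCenterPre T) :
    G.star h ∈ G.qCenterPre T := by
  rw [hT.mem_qCenterPre_iff, G.star_star]
  refine ⟨fun y => ?_, hT.conj_subset_of_mem_qCenterPre hh⟩
  calc G.smul (G.cls T (G.star h)) (G.cls T y)
      = G.sstar (G.smul (G.cls T (G.star y)) (G.cls T h)) := by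
        rw [hT.sstar_cls_smul_cls, G.star_star]
    _ = G.sstar (G.smul (G.cls T h) (G.cls T (G.star y))) := by
        rw [(hT.mem_qCenterPre_iff.1 hh).1]
    _ = G.smul (G.cls T y) (G.cls T (G.star h)) := by
        rw [hT.sstar_cls_smul_cls, G.star_star]

lemma mem_qCenterPre_of_mem_hmul (hT : G.IsClosed T) {g h w : H} (hg : g ∈ G.qCenterPre T)
    (hh : h ∈ G.qCenterPre T) (hw : w ∈ G.hmul g h) : w ∈ G.qCenterPre T := by
  obtain ⟨hg_comm, hg_conj⟩ := hT.mem_qCenterPre_iff.1 hg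
  obtain ⟨hh_comm, hh_conj⟩ := hT.mem_qCenterPre_iff.1 hh
  have hw_cls := hT.cls_eq_cls_smul_cls_of_mem_hmul
    (hT.smul_singleton_comm_of_mem_qCenterPre hh) hh_conj hw
  refine hT.mem_qCenterPre_iff.2
    ⟨fun y => ?_, G.star_conj_subset_of_mem_hmul hg_conj hh_conj hw⟩
  calc G.smul (G.cls T w) (G.cls T y)
      = G.smul (G.cls T g) (G.smul (G.cls T h) (G.cls T y)) := by rw [hw_cls, smul_assoc]
    _ = G.smul (G.smul (G.cls T g) (G.cls T y)) (G.cls T h) := by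
        rw [hh_comm, smul_assoc]
    _ = G.smul (G.cls T y) (G.cls T w) := by rw [hg_comm, hw_cls, smul_assoc]

lemma subset_qCenterPre (hT : G.IsClosed T) : T ⊆ G.qCenterPre T := by
  intro t ht
  rw [hT.mem_qCenterPre_iff, hT.cls_eq_self_iff.2 ht]
  refine ⟨fun y => by rw [hT.smul_cls, hT.cls_smul], ?_⟩
  calc G.smul (G.smul {G.star t} T) {t} ⊆ G.smul (G.smul T T) T :=
        G.smul_mono (G.smul_mono (Set.singleton_subset_iff.2 (hT.star_mem ht)) subset_rfl)
          (Set.singleton_subset_iff.2 ht)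
    _ = T := by rw [hT.smul_self, hT.smul_self]

protected lemma qCenterPre (hT : G.IsClosed T) : G.IsClosed (G.qCenterPre T) := by
  refine G.isClosed_of_forall (hT.subset_qCenterPre hT.one_mem)
    (fun _ => hT.star_mem_qCenterPre) fun w hw => ?_
  obtain ⟨g, hg, h, hh, hw⟩ := G.mem_smul.1 hw
  exact hT.mem_qCenterPre_of_mem_hmul hg hh hw

end IsClosed

lemma isClosed_upperCentral : ∀ n, G.IsClosed (G.upperCentral n)
  | 0 => G.isClosed_singleton_one
  | n + 1 => (isClosed_upperCentral n).qCenterPre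

lemma upperCentral_mono : Monotone G.upperCentral :=
  monotone_nat_of_le_succ fun n => (G.isClosed_upperCentral n).subset_qCenterPre

lemma upperCentral_eq_of_le {n m : ℕ} (hstab : G.upperCentral (n + 1) = G.upperCentral n)
    (hnm : n ≤ m) : G.upperCentral m = G.upperCentral n := by
  induction m, hnm using Nat.le_induction with
  | base => rfl
  | succ m _ ih =>
    change G.qCenterPre (G.upperCentral m) = _
    rw [ih]
    exact hstab

lemma weaklyNilpotent_iff_of_stable {n : ℕ}
    (hstab : G.upperCentral (n + 1) = G.upperCentral n) :
    G.WeaklyNilpotent ↔ G.upperCentral n = Set.univ := by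
  refine ⟨fun ⟨m, hm⟩ => Set.eq_univ_of_univ_subset ?_, fun h => ⟨n, h⟩⟩
  rw [← hm, ← G.upperCentral_eq_of_le hstab (le_max_right m n)]
  exact G.upperCentral_mono (le_max_left m n)

lemma one_mem_center : G.one ∈ G.center :=
  ⟨fun x => by rw [G.one_hmul, G.hmul_one], by rw [G.star_one, G.hmul_one]⟩

lemma cls_singleton_one (x : H) : G.cls {G.one} x = {x} := by
  rw [cls, singleton_one_smul, smul_singleton_one]

lemma qCenterPre_singleton_one : G.qCenterPre {G.one} = G.center := by
  have hinj := Set.image_injective.2 (Set.singleton_injective (α := H))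
  have hcls : G.cls {G.one} = ({·} : H → Set H) := funext G.cls_singleton_one
  ext h
  simp only [qCenterPre, center, Set.mem_ofPred_eq, hcls, smul_singleton_one, smul_singleton]
  rw [show ({{G.one}} : Set (Set H)) = ({·} : H → Set H) '' {G.one} from
    Set.image_singleton.symm]
  simp only [hinj.eq_iff]

lemma upperCentral_eq_singleton_one (hc : G.center = {G.one}) :
    ∀ m, G.upperCentral m = {G.one}
  | 0 => rfl
  | m + 1 => by
    change G.qCenterPre (G.upperCentral m) = _
    rw [upperCentral_eq_singleton_one hc m, qCenterPre_singleton_one, hc]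

lemma weaklyNilpotent_iff_subsingleton (hc : G.center = {G.one}) :
    G.WeaklyNilpotent ↔ Subsingleton H := by
  simp only [WeaklyNilpotent, G.upperCentral_eq_singleton_one hc, exists_const,
    Set.eq_univ_iff_forall, Set.mem_singleton_iff, subsingleton_iff_forall_eq G.one]

lemma qcls_surjective (T : Set H) : Function.Surjective (G.qcls T) := by
  rintro ⟨_, h, rfl⟩
  exact ⟨h, rfl⟩

variable {G} in
lemma IsClosed.qcls_eq_qcls_one_iff {T : Set H} (hT : G.IsClosed T) {h : H} :
    G.qcls T h = G.qcls T G.one ↔ h ∈ T := by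
  rw [Subtype.ext_iff]
  change G.cls T h = G.cls T G.one ↔ _
  rw [hT.cls_one, hT.cls_eq_self_iff]

variable {G} in
lemma IsClosed.subsingleton_quotSet_iff {T : Set H} (hT : G.IsClosed T) :
    Subsingleton (G.quotSet T) ↔ T = Set.univ := by
  rw [subsingleton_iff_forall_eq (G.qcls T G.one), (G.qcls_surjective T).forall,
    Set.eq_univ_iff_forall]
  exact forall_congr' fun _ => hT.qcls_eq_qcls_one_iff

structure IsQuotient (T : Set H) (Q : Hypergroup (G.quotSet T)) : Prop where
  hmul_qcls : ∀ a b : H, Q.hmul (G.qcls T a) (G.qcls T b) =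
    {x : G.quotSet T | ∃ y ∈ G.smul (G.smul {a} T) {b}, x = G.qcls T y}
  one_eq : Q.one = G.qcls T G.one
  star_qcls : ∀ h : H, Q.star (G.qcls T h) = G.qcls T (G.star h)

namespace IsQuotient

variable {G} {T : Set H} {Q : Hypergroup (G.quotSet T)}

lemma image_val_hmul (hQ : G.IsQuotient T Q) (a b : H) :
    Subtype.val '' Q.hmul (G.qcls T a) (G.qcls T b) = G.cls T '' G.smul (G.smul {a} T) {b} := by
  rw [hQ.hmul_qcls]
  ext A
  constructor
  · rintro ⟨_, ⟨y, hy, rfl⟩, rfl⟩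
    exact ⟨y, hy, rfl⟩
  · rintro ⟨y, hy, rfl⟩
    exact ⟨_, ⟨y, hy, rfl⟩, rfl⟩

lemma qcls_mem_center_iff (hQ : G.IsQuotient T Q) (hT : G.IsClosed T) {h : H} :
    G.qcls T h ∈ Q.center ↔ h ∈ G.qCenterPre T := by
  have hinj := Set.image_injective.2 (Subtype.val_injective (p := (· ∈ G.quotSet T)))
  simp only [center, qCenterPre, Set.mem_ofPred_eq, (G.qcls_surjective T).forall, hQ.star_qcls]
  refine and_congr (forall_congr' fun y => ?_) ?_
  · rw [← hinj.eq_iff, hQ.image_val_hmul, hQ.image_val_hmul]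
  · rw [← hinj.eq_iff, hQ.image_val_hmul, Set.image_singleton, hQ.one_eq]
    change _ = {G.cls T G.one} ↔ _
    rw [hT.cls_one]

lemma center_eq_singleton_one (hQ : G.IsQuotient T Q) (hT : G.IsClosed T)
    (hstab : G.qCenterPre T = T) : Q.center = {Q.one} := by
  refine Set.Subset.antisymm (fun a ha => ?_) (Set.singleton_subset_iff.2 Q.one_mem_center)
  obtain ⟨h, rfl⟩ := G.qcls_surjective T a
  rw [Set.mem_singleton_iff, hQ.one_eq, hT.qcls_eq_qcls_one_iff, ← hstab]
  exact (hQ.qcls_mem_center_iff hT).1 ha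

end IsQuotient

end Hypergroup

theorem quot_hypercenter_weaklyNilpotent_general {H : Type*} (G : Hypergroup H)
    (n : ℕ) (hstab : G.upperCentral (n + 1) = G.upperCentral n)
    (Q : Hypergroup (G.quotSet (G.upperCentral n)))
    (hmul : ∀ a b : H,
      Q.hmul (G.qcls (G.upperCentral n) a) (G.qcls (G.upperCentral n) b) =
      {x : G.quotSet (G.upperCentral n) |
        ∃ y ∈ G.smul (G.smul {a} (G.upperCentral n)) {b},
          x = G.qcls (G.upperCentral n) y})
    (hone : Q.one = G.qcls (G.upperCentral n) G.one)
    (hstar : ∀ h : H, Q.star (G.qcls (G.upperCentral n) h) =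
      G.qcls (G.upperCentral n) (G.star h)) :
    (Q.WeaklyNilpotent ↔ G.WeaklyNilpotent) ∧
    (Q.WeaklyNilpotent → G.upperCentral n = Set.univ) ∧
    (G.upperCentral n ≠ Set.univ →
      G.qCenterPre (G.upperCentral n) = G.upperCentral n) := by
  have hZ := G.isClosed_upperCentral n
  have hQ : G.IsQuotient (G.upperCentral n) Q := ⟨hmul, hone, hstar⟩
  have hQ_nil : Q.WeaklyNilpotent ↔ G.upperCentral n = Set.univ :=
    (Q.weaklyNilpotent_iff_subsingleton (hQ.center_eq_singleton_one hZ hstab)).trans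
      hZ.subsingleton_quotSet_iff
  exact ⟨hQ_nil.trans (G.weaklyNilpotent_iff_of_stable hstab).symm, hQ_nil.1, fun _ => hstab⟩

/-- for a finite hypergroup `H` with hypercenter
`Z∞(H) = Zₙ(H)` (the terminal term: `Zₙ₊₁(H) = Zₙ(H)`), the quotient
`H//Z∞(H)` is weakly nilpotent iff `H` is; in fact if `H//Z∞(H)` is weakly
nilpotent then `H = Z∞(H)`; and `Z(H//Z∞(H))` is trivial whenever
`Z∞(H) ≠ H`. -/
theorem quot_hypercenter_weaklyNilpotent {H : Type*} [Finite H] (G : Hypergroup H)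
    (n : ℕ) (hstab : G.upperCentral (n + 1) = G.upperCentral n)
    (Q : Hypergroup (G.quotSet (G.upperCentral n)))
    (hmul : ∀ a b : H,
      Q.hmul (G.qcls (G.upperCentral n) a) (G.qcls (G.upperCentral n) b) =
      {x : G.quotSet (G.upperCentral n) |
        ∃ y ∈ G.smul (G.smul {a} (G.upperCentral n)) {b},
          x = G.qcls (G.upperCentral n) y})
    (hone : Q.one = G.qcls (G.upperCentral n) G.one)
    (hstar : ∀ h : H, Q.star (G.qcls (G.upperCentral n) h) =
      G.qcls (G.upperCentral n) (G.star h)) :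
    (Q.WeaklyNilpotent ↔ G.WeaklyNilpotent) ∧
    (Q.WeaklyNilpotent → G.upperCentral n = Set.univ) ∧
    (G.upperCentral n ≠ Set.univ →
      G.qCenterPre (G.upperCentral n) = G.upperCentral n) :=
  quot_hypercenter_weaklyNilpotent_general G n hstab Q hmul hone hstar
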